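/- arXiv:2508.03632 — 3 statements merged into one kernel-verified Lean document; each statement's English description precedes it below -/
import Mathlib

section
/- Let S be an inverse semigroup with a zero element 0 such that Z(S)× has at least two elements. Then diam(Γ(S)) = 1 if and only if Z(S)× = Min(S×), where Min(S×) is the set of minimal elements of S \ {0} with respect to the natural partial order. -/
namespace ZDG

variable {S : Type*} [Semigroup S]

/-- The natural partial order on an inverse semigroup: `a ≤ b` iff `a = e * b`
for some idempotent `e`. -/
def nle (a b : S) : Prop := ∃ e : S, e * e = e ∧ a = e * b

/-- `omg a b` is the set `ω(a,b)` of common lower bounds of `a` and `b` with respect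
to the natural partial order. -/
def omg (a b : S) : Set S := {c | nle c a ∧ nle c b}

lemma omg_comm (a b : S) : omg a b = omg b a := by
  ext c; exact and_comm

/-- `Zx z` is the set `Z(S)×` of nonzero zero-divisors of `S` (with zero element `z`). -/
def Zx (z : S) : Set S := {a | a ≠ z ∧ ∃ b : S, b ≠ z ∧ omg a b = {z}}

/-- The zero-divisor graph `Γ(S)`: vertices are the elements of `Z(S)×`, and two
distinct vertices `a`, `b` are adjacent iff `ω(a,b) = {z}`. -/
def ZDGraph (z : S) : SimpleGraph (Zx z) where
  Adj a b := (a : S) ≠ (b : S) ∧ omg (a : S) (b : S) = {z}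
  symm := ⟨by
    rintro a b ⟨h1, h2⟩
    exact ⟨fun h => h1 h.symm, (omg_comm (b : S) (a : S)).trans h2⟩⟩
  loopless := ⟨by rintro a ⟨h1, -⟩; exact h1 rfl⟩

/-- The set of minimal elements of `S \ {z}` with respect to the natural partial order. -/
def MinOf (z : S) : Set S := {x | x ≠ z ∧ ∀ y : S, y ≠ z → nle y x → y = x}

/-- The annihilator of `x`: the set of `y` with `ω(x,y) = {z}`. -/
def Ann (z : S) (x : S) : Set S := {y | omg x y = {z}}

section Lemmas

variable {S : Type*} [Semigroup S]

lemma nle_refl (hinv : ∀ a : S, ∃ b : S, a * b * a = a ∧ b * a * b = b) (a : S) :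
    nle a a := by
  obtain ⟨b, hb1, hb2⟩ := hinv a
  refine ⟨a * b, ?_, hb1.symm⟩
  calc a * b * (a * b) = a * b * a * b := by simp [mul_assoc]
    _ = a * b := by rw [hb1]

lemma nle_trans (hcomm : ∀ e f : S, e * e = e → f * f = f → e * f = f * e)
    {a b c : S} (h1 : nle a b) (h2 : nle b c) : nle a c := by
  obtain ⟨e, he, hea⟩ := h1
  obtain ⟨f, hf, hfb⟩ := h2
  refine ⟨e * f, ?_, by rw [mul_assoc, ← hfb, ← hea]⟩
  calc e * f * (e * f) = e * (f * e) * f := by simp [mul_assoc]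
    _ = e * (e * f) * f := by rw [hcomm e f he hf]
    _ = (e * e) * (f * f) := by simp [mul_assoc]
    _ = e * f := by rw [he, hf]

variable {z : S} (hz : ∀ x : S, z * x = z ∧ x * z = z)

include hz

lemma z_nle (a : S) : nle z a := ⟨z, (hz z).1, (hz a).1.symm⟩

lemma nle_z {y : S} (h : nle y z) : y = z := by
  obtain ⟨e, -, hey⟩ := h
  rw [hey, (hz e).2]

lemma z_mem_omg (a b : S) : z ∈ omg a b := ⟨z_nle hz a, z_nle hz b⟩

lemma omg_eq_singleton {a b : S} (h : ∀ c, nle c a → nle c b → c = z) :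
    omg a b = {z} := by
  ext c
  constructor
  · rintro ⟨h1, h2⟩; exact h c h1 h2
  · rintro rfl; exact z_mem_omg hz a b

lemma omg_mono (hcomm : ∀ e f : S, e * e = e → f * f = f → e * f = f * e)
    {y a d : S} (hya : nle y a) (h : omg a d = {z}) : omg y d = {z} := by
  refine omg_eq_singleton hz ?_
  intro c hc1 hc2
  have : c ∈ omg a d := ⟨nle_trans hcomm hc1 hya, hc2⟩
  rw [h] at this
  exact this

/-- A nonzero element below a zero-divisor is a zero-divisor. -/
lemma mem_Zx_of_nle (hcomm : ∀ e f : S, e * e = e → f * f = f → e * f = f * e)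
    {y a : S} (hy : y ≠ z) (ha : a ∈ Zx z) (hya : nle y a) : y ∈ Zx z := by
  obtain ⟨-, d, hd, hann⟩ := ha
  exact ⟨hy, d, hd, omg_mono hz hcomm hya hann⟩

end Lemmas

end ZDG

open ZDG

/-- `diam(Γ(S)) = 1` iff `Z(S)× = Min(S×)`. -/
theorem stmt4 {S : Type*} [Semigroup S] [Nontrivial S]
    (hinv : ∀ a : S, ∃ b : S, a * b * a = a ∧ b * a * b = b)
    (hcomm : ∀ e f : S, e * e = e → f * f = f → e * f = f * e)
    (z : S) (hz : ∀ x : S, z * x = z ∧ x * z = z)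
    (h2 : (Zx z).Nontrivial) :
    (ZDGraph z).ediam = 1 ↔ Zx z = MinOf z := by
  -- complete graph characterization
  have hcomplete : (ZDGraph z).ediam = 1 ↔
      ∀ a b : Zx z, (a : S) ≠ (b : S) → omg (a : S) (b : S) = {z} := by
    constructor
    · intro hd a b hab
      have hne : a ≠ b := fun h => hab (by rw [h])
      have h1 : (ZDGraph z).edist a b ≤ 1 := hd ▸ SimpleGraph.edist_le_ediam
      have h0 : (ZDGraph z).edist a b ≠ 0 := SimpleGraph.edist_eq_zero_iff.ne.mpr hne
      have : (ZDGraph z).edist a b = 1 :=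
        le_antisymm h1 (Order.one_le_iff_pos.mpr (pos_iff_ne_zero.mpr h0))
      exact (SimpleGraph.edist_eq_one_iff_adj.mp this).2
    · intro hadj
      obtain ⟨a, ha, b, hb, hab⟩ := h2
      have hAdj : (ZDGraph z).Adj ⟨a, ha⟩ ⟨b, hb⟩ := ⟨hab, hadj ⟨a, ha⟩ ⟨b, hb⟩ hab⟩
      refine le_antisymm ?_ ?_
      · refine SimpleGraph.ediam_le_of_edist_le fun u v => ?_
        by_cases huv : u = v
        · subst huv; simp [SimpleGraph.edist_self]
        · exact le_of_eq (SimpleGraph.edist_eq_one_iff_adj.mpr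
            ⟨fun h => huv (Subtype.ext h), hadj u v fun h => huv (Subtype.ext h)⟩)
      · calc (1 : ℕ∞) = (ZDGraph z).edist ⟨a, ha⟩ ⟨b, hb⟩ :=
              (SimpleGraph.edist_eq_one_iff_adj.mpr hAdj).symm
          _ ≤ _ := SimpleGraph.edist_le_ediam
  rw [hcomplete]
  constructor
  · intro hadj
    ext x
    constructor
    · -- Zx ⊆ Min
      intro hx
      refine ⟨hx.1, fun y hy hyx => ?_⟩
      by_contra hne
      have hyZ : y ∈ Zx z := mem_Zx_of_nle hz hcomm hy hx hyx
      have := hadj ⟨y, hyZ⟩ ⟨x, hx⟩ hne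
      have hy_mem : y ∈ omg y x := ⟨nle_refl hinv y, hyx⟩
      rw [this] at hy_mem
      exact hy hy_mem
    · -- Min ⊆ Zx
      intro hx
      obtain ⟨a, ha, b, hb, hab⟩ := h2
      -- pick an element of Zx distinct from x
      obtain ⟨c, hc, hcx⟩ : ∃ c, c ∈ Zx z ∧ c ≠ x := by
        by_cases h : a = x
        · exact ⟨b, hb, fun hbx => hab (hbx.trans h.symm).symm ⟩
        · exact ⟨a, ha, h⟩
      by_cases hcase : omg x c = {z}
      · exact ⟨hx.1, c, hc.1, hcase⟩
      · -- there is a nonzero common lower bound, which must equal x, so x ≤ c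
        have hxc : nle x c := by
          have hsub : ∃ d ∈ omg x c, d ≠ z := by
            by_contra h
            push_neg at h
            exact hcase (omg_eq_singleton hz fun d h1 h2 => h d ⟨h1, h2⟩)
          obtain ⟨d, ⟨hd1, hd2⟩, hdz⟩ := hsub
          have := hx.2 d hdz hd1
          rwa [this] at hd2
        exact mem_Zx_of_nle hz hcomm hx.1 hc hxc
  · -- Zx = Min ⇒ complete
    intro heq a b hab
    refine omg_eq_singleton hz fun c hca hcb => ?_
    by_contra hcz
    have hcZa : c ∈ Zx z := mem_Zx_of_nle hz hcomm hcz a.2 hca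
    have h1 : c = (a : S) := by
      have := (heq ▸ a.2 : (a : S) ∈ MinOf z)
      exact this.2 c hcz hca
    have h2' : c = (b : S) := by
      have := (heq ▸ b.2 : (b : S) ∈ MinOf z)
      exact this.2 c hcz hcb
    exact hab (h1 ▸ h2')
end

section
/- Let S be an inverse semigroup without zero element with |S/σ| ≥ 2, and let S⁰ be S with an external zero adjoined. Then the zero-divisor graph Γ(S⁰) has vertex set S and is the complete multipartite graph whose parts are the σ-classes: two distinct elements a, b ∈ S are adjacent in Γ(S⁰) if and only if a and b lie in distinct σ-classes. -/
open ZDG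

namespace ZDG

/-- The least group congruence `σ` on an inverse semigroup: `a σ b` iff `e*a = f*b`
for some idempotents `e`, `f`. -/
def sigmaRel {S : Type*} [Semigroup S] (a b : S) : Prop :=
  ∃ e f : S, e * e = e ∧ f * f = f ∧ e * a = f * b

end ZDG


namespace ZDGaux

open ZDG

variable {S : Type*} [Semigroup S]

lemma idem_mul {e f : S} (hcomm : ∀ e f : S, e * e = e → f * f = f → e * f = f * e)
    (he : e * e = e) (hf : f * f = f) : (e * f) * (e * f) = e * f := by
  calc e * f * (e * f) = e * (f * e) * f := by simp only [mul_assoc]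
    _ = e * (e * f) * f := by rw [hcomm e f he hf]
    _ = (e * e) * (f * f) := by simp only [mul_assoc]
    _ = e * f := by rw [he, hf]

lemma sig_refl (hinv : ∀ a : S, ∃ b : S, a * b * a = a ∧ b * a * b = b) (a : S) :
    sigmaRel a a := by
  obtain ⟨b, h1, _⟩ := hinv a
  exact ⟨a * b, a * b, by rw [← mul_assoc, h1], by rw [← mul_assoc, h1], rfl⟩

lemma sig_symm {a b : S} (h : sigmaRel a b) : sigmaRel b a := by
  obtain ⟨e, f, he, hf, hef⟩ := h
  exact ⟨f, e, hf, he, hef.symm⟩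

lemma sig_trans (hcomm : ∀ e f : S, e * e = e → f * f = f → e * f = f * e)
    {a b c : S} (h1 : sigmaRel a b) (h2 : sigmaRel b c) : sigmaRel a c := by
  obtain ⟨e, f, he, hf, hef⟩ := h1
  obtain ⟨g, h, hg, hh, hgh⟩ := h2
  refine ⟨g * e, f * h, idem_mul hcomm hg he, idem_mul hcomm hf hh, ?_⟩
  calc g * e * a = g * (e * a) := by rw [mul_assoc]
    _ = g * (f * b) := by rw [hef]
    _ = (g * f) * b := by rw [mul_assoc]
    _ = (f * g) * b := by rw [hcomm g f hg hf]
    _ = f * (g * b) := by rw [mul_assoc]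
    _ = f * (h * c) := by rw [hgh]
    _ = (f * h) * c := by rw [mul_assoc]

lemma omg_key {a b : S} :
    omg ((a : WithZero S)) ((b : WithZero S)) = {(0 : WithZero S)} ↔ ¬ sigmaRel a b := by
  constructor
  · intro hom hs
    obtain ⟨e, f, he, hf, hef⟩ := hs
    have hc : ((e * a : S) : WithZero S) ∈ omg ((a : WithZero S)) ((b : WithZero S)) := by
      refine ⟨⟨(e : WithZero S), ?_, ?_⟩, ⟨(f : WithZero S), ?_, ?_⟩⟩
      · rw [← WithZero.coe_mul, he]
      · rw [← WithZero.coe_mul]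
      · rw [← WithZero.coe_mul, hf]
      · rw [hef, ← WithZero.coe_mul]
    rw [hom] at hc
    exact WithZero.coe_ne_zero hc
  · intro hns
    ext c
    simp only [Set.mem_singleton_iff]
    constructor
    · rintro ⟨⟨e, he, hce⟩, ⟨f, hf, hcf⟩⟩
      by_contra hc0
      obtain ⟨c', rfl⟩ := WithZero.ne_zero_iff_exists.mp hc0
      have he0 : e ≠ 0 := by
        rintro rfl
        rw [zero_mul] at hce
        exact WithZero.coe_ne_zero hce
      have hf0 : f ≠ 0 := by
        rintro rfl
        rw [zero_mul] at hcf
        exact WithZero.coe_ne_zero hcf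
      obtain ⟨e', rfl⟩ := WithZero.ne_zero_iff_exists.mp he0
      obtain ⟨f', rfl⟩ := WithZero.ne_zero_iff_exists.mp hf0
      rw [← WithZero.coe_mul] at he hce hf hcf
      exact hns ⟨e', f', WithZero.coe_inj.mp he, WithZero.coe_inj.mp hf,
        ((WithZero.coe_inj.mp hce).symm.trans (WithZero.coe_inj.mp hcf))⟩
    · rintro rfl
      exact ⟨⟨0, by rw [zero_mul], (zero_mul _).symm⟩, ⟨0, by rw [zero_mul], (zero_mul _).symm⟩⟩

end ZDGaux

open ZDGaux

/-- if `|S/σ| ≥ 2`, then `Γ(S⁰)` has vertex set `S` and two distinct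
elements of `S` are adjacent in `Γ(S⁰)` iff they lie in distinct `σ`-classes. -/
theorem stmt13 {S : Type*} [Semigroup S]
    (hinv : ∀ a : S, ∃ b : S, a * b * a = a ∧ b * a * b = b)
    (hcomm : ∀ e f : S, e * e = e → f * f = f → e * f = f * e)
    (hnz : ¬ ∃ z : S, ∀ x : S, z * x = z ∧ x * z = z)
    (hσ2 : ∃ a b : S, ¬ sigmaRel a b) :
    Zx (0 : WithZero S) = {x : WithZero S | x ≠ 0} ∧
    ∀ (a b : S) (ha : (a : WithZero S) ∈ Zx (0 : WithZero S))
      (hb : (b : WithZero S) ∈ Zx (0 : WithZero S)), a ≠ b →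
        ((ZDGraph (0 : WithZero S)).Adj ⟨(a : WithZero S), ha⟩ ⟨(b : WithZero S), hb⟩ ↔
          ¬ sigmaRel a b) := by
  obtain ⟨x0, y0, hxy⟩ := hσ2
  have hmem : ∀ a : S, (a : WithZero S) ∈ Zx (0 : WithZero S) := by
    intro a
    refine ⟨WithZero.coe_ne_zero, ?_⟩
    by_cases h : sigmaRel a x0
    · exact ⟨(y0 : WithZero S), WithZero.coe_ne_zero,
        omg_key.mpr (fun hay => hxy (sig_trans hcomm (sig_symm h) hay))⟩
    · exact ⟨(x0 : WithZero S), WithZero.coe_ne_zero, omg_key.mpr h⟩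
  constructor
  · ext x
    constructor
    · rintro ⟨h1, -⟩; exact h1
    · intro hx
      obtain ⟨a, rfl⟩ := WithZero.ne_zero_iff_exists.mp hx
      exact hmem a
  · intro a b ha hb hab
    constructor
    · rintro ⟨-, h⟩
      exact omg_key.mp h
    · intro h
      exact ⟨fun hh => hab (WithZero.coe_inj.mp hh), omg_key.mpr h⟩
end

section
/- Let S be an inverse semigroup without zero element and let S⁰ be S with an external zero adjoined. Then diam(Γ(S⁰)) = 2 if and only if |S/σ| ≥ 2 and σ is not the identity relation on S. -/
open ZDG

namespace ZDG
variable {S : Type*} [Semigroup S]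

lemma sigma_refl (hinv : ∀ a : S, ∃ b : S, a * b * a = a ∧ b * a * b = b) (a : S) :
    sigmaRel a a := by
  obtain ⟨b, h1, -⟩ := hinv a
  exact ⟨a * b, a * b, by rw [← mul_assoc, h1], by rw [← mul_assoc, h1], rfl⟩

lemma sigma_symm {a b : S} : sigmaRel a b → sigmaRel b a := by
  rintro ⟨e, f, he, hf, h⟩; exact ⟨f, e, hf, he, h.symm⟩

lemma idem_mul (hcomm : ∀ e f : S, e * e = e → f * f = f → e * f = f * e)
    {e f : S} (he : e * e = e) (hf : f * f = f) : (e * f) * (e * f) = e * f := by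
  calc e * f * (e * f) = e * (f * e) * f := by simp [mul_assoc]
    _ = e * (e * f) * f := by rw [hcomm e f he hf]
    _ = (e * e) * (f * f) := by simp [mul_assoc]
    _ = e * f := by rw [he, hf]

lemma sigma_trans (hcomm : ∀ e f : S, e * e = e → f * f = f → e * f = f * e)
    {a b c : S} : sigmaRel a b → sigmaRel b c → sigmaRel a c := by
  rintro ⟨e, f, he, hf, h1⟩ ⟨g, k, hg, hk, h2⟩
  refine ⟨g * e, f * k, idem_mul hcomm hg he, idem_mul hcomm hf hk, ?_⟩
  calc g * e * a = g * (f * b) := by rw [mul_assoc, h1]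
    _ = f * (g * b) := by rw [← mul_assoc, hcomm g f hg hf, mul_assoc]
    _ = f * (k * c) := by rw [h2]
    _ = f * k * c := (mul_assoc ..).symm

lemma omg_eq_zero_iff (a b : S) :
    omg (a : WithZero S) (b : WithZero S) = {(0 : WithZero S)} ↔ ¬ sigmaRel a b := by
  constructor
  · rintro h ⟨e, f, he, hf, hef⟩
    have hmem : ((e * a : S) : WithZero S) ∈ omg (a : WithZero S) (b : WithZero S) := by
      refine ⟨⟨(e : WithZero S), ?_, ?_⟩, ⟨(f : WithZero S), ?_, ?_⟩⟩
      · rw [← WithZero.coe_mul, he]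
      · push_cast; rfl
      · rw [← WithZero.coe_mul, hf]
      · rw [hef]; push_cast; rfl
    rw [h] at hmem
    exact WithZero.coe_ne_zero hmem
  · intro h
    ext c
    simp only [Set.mem_singleton_iff]
    constructor
    · rintro ⟨⟨E, hE, hc1⟩, ⟨F, hF, hc2⟩⟩
      by_contra hc0
      obtain ⟨s, rfl⟩ := (WithZero.ne_zero_iff_exists).mp hc0
      have hE0 : E ≠ 0 := by rintro rfl; rw [zero_mul] at hc1; exact hc0 hc1
      have hF0 : F ≠ 0 := by rintro rfl; rw [zero_mul] at hc2; exact hc0 hc2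
      obtain ⟨e, rfl⟩ := (WithZero.ne_zero_iff_exists).mp hE0
      obtain ⟨f, rfl⟩ := (WithZero.ne_zero_iff_exists).mp hF0
      refine h ⟨e, f, ?_, ?_, ?_⟩
      · exact_mod_cast hE
      · exact_mod_cast hF
      · have : ((e * a : S) : WithZero S) = ((f * b : S) : WithZero S) := by
          push_cast; rw [← hc1, ← hc2]
        exact_mod_cast this
    · rintro rfl
      exact ⟨⟨0, by simp, by simp⟩, ⟨0, by simp, by simp⟩⟩

lemma mem_Zx_iff (s : S) :
    (↑s : WithZero S) ∈ Zx (0 : WithZero S) ↔ ∃ t : S, ¬ sigmaRel s t := by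
  constructor
  · rintro ⟨-, b, hb0, homg⟩
    obtain ⟨t, rfl⟩ := (WithZero.ne_zero_iff_exists).mp hb0
    exact ⟨t, (omg_eq_zero_iff s t).mp homg⟩
  · rintro ⟨t, ht⟩
    exact ⟨WithZero.coe_ne_zero, ↑t, WithZero.coe_ne_zero, (omg_eq_zero_iff s t).mpr ht⟩

end ZDG

/-- `diam(Γ(S⁰)) = 2` iff `|S/σ| ≥ 2` and `σ` is not the identity
relation on `S`. -/
theorem stmt16 {S : Type*} [Semigroup S]
    (hinv : ∀ a : S, ∃ b : S, a * b * a = a ∧ b * a * b = b)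
    (hcomm : ∀ e f : S, e * e = e → f * f = f → e * f = f * e)
    (hnz : ¬ ∃ z : S, ∀ x : S, z * x = z ∧ x * z = z) :
    (ZDGraph (0 : WithZero S)).ediam = 2 ↔
      ((∃ a b : S, ¬ sigmaRel a b) ∧ ∃ a b : S, a ≠ b ∧ sigmaRel a b) := by
  classical
  have adj_iff : ∀ u v : Zx (0 : WithZero S), (ZDGraph (0 : WithZero S)).Adj u v ↔
      ((u : WithZero S) ≠ (v : WithZero S) ∧
        omg (u : WithZero S) (v : WithZero S) = {(0 : WithZero S)}) := fun u v => Iff.rfl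
  set G := ZDGraph (0 : WithZero S) with hGdef
  constructor
  · intro hdiam
    have hpair : ∃ u v : Zx (0 : WithZero S), 1 < G.edist u v := by
      by_contra hc
      push_neg at hc
      have h1 : G.ediam ≤ 1 := SimpleGraph.ediam_le_iff.mpr fun u v => hc u v
      rw [hdiam] at h1
      exact absurd h1 (by norm_num)
    obtain ⟨⟨u1, hu⟩, ⟨v1, hv⟩, huv⟩ := hpair
    obtain ⟨s, rfl⟩ := (WithZero.ne_zero_iff_exists).mp hu.1
    obtain ⟨t, rfl⟩ := (WithZero.ne_zero_iff_exists).mp hv.1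
    have hne : (⟨(↑s : WithZero S), hu⟩ : Zx (0 : WithZero S)) ≠ ⟨↑t, hv⟩ := fun h => by
      rw [h, SimpleGraph.edist_self] at huv
      exact absurd huv (by norm_num)
    have hst : s ≠ t := fun h => hne (by subst h; rfl)
    have hnadj : ¬ G.Adj ⟨↑s, hu⟩ ⟨↑t, hv⟩ := fun h => by
      rw [SimpleGraph.edist_eq_one_iff_adj.mpr h] at huv
      exact absurd huv (by norm_num)
    rw [adj_iff] at hnadj
    push_neg at hnadj
    have homg : ¬ omg (↑s : WithZero S) (↑t : WithZero S) = {(0 : WithZero S)} :=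
      hnadj (fun h => hst (WithZero.coe_inj.mp h))
    have hsig : sigmaRel s t := not_not.mp fun h => homg ((omg_eq_zero_iff s t).mpr h)
    obtain ⟨b1, hb0, hbomg⟩ := hu.2
    obtain ⟨t', rfl⟩ := (WithZero.ne_zero_iff_exists).mp hb0
    exact ⟨⟨s, t', (omg_eq_zero_iff s t').mp hbomg⟩, ⟨s, t, hst, hsig⟩⟩
  · rintro ⟨⟨a, b, hab⟩, ⟨c, d, hcd, hσ⟩⟩
    obtain ⟨x, hcx⟩ : ∃ x : S, ¬ sigmaRel c x := by
      by_cases h1 : sigmaRel c a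
      · exact ⟨b, fun h2 => hab (sigma_trans hcomm (sigma_symm h1) h2)⟩
      · exact ⟨a, h1⟩
    have hdx : ¬ sigmaRel d x := fun h => hcx (sigma_trans hcomm hσ h)
    have hxc : ¬ sigmaRel x c := fun h => hcx (sigma_symm h)
    have hxd : ¬ sigmaRel x d := fun h => hdx (sigma_symm h)
    have hcx' : c ≠ x := fun h => hcx (by rw [← h]; exact sigma_refl hinv c)
    have hdx' : d ≠ x := fun h => hdx (by rw [← h]; exact sigma_refl hinv d)
    set C : Zx (0 : WithZero S) := ⟨↑c, (mem_Zx_iff c).mpr ⟨x, hcx⟩⟩ with hC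
    set D : Zx (0 : WithZero S) := ⟨↑d, (mem_Zx_iff d).mpr ⟨x, hdx⟩⟩ with hD
    set X : Zx (0 : WithZero S) := ⟨↑x, (mem_Zx_iff x).mpr ⟨c, hxc⟩⟩ with hX
    have adjCX : G.Adj C X := (adj_iff C X).mpr
      ⟨fun h => hcx' (WithZero.coe_inj.mp h), (omg_eq_zero_iff c x).mpr hcx⟩
    have adjXD : G.Adj X D := (adj_iff X D).mpr
      ⟨fun h => hdx' (WithZero.coe_inj.mp h).symm, (omg_eq_zero_iff x d).mpr hxd⟩
    have hle : G.edist C D ≤ 2 := by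
      calc G.edist C D ≤ G.edist C X + G.edist X D := G.edist_triangle
        _ = 2 := by
          rw [SimpleGraph.edist_eq_one_iff_adj.mpr adjCX,
            SimpleGraph.edist_eq_one_iff_adj.mpr adjXD]
          rfl
    have hCD : C ≠ D := fun h => hcd (WithZero.coe_inj.mp (congrArg Subtype.val h))
    have hnadj : ¬ G.Adj C D := fun h => ((omg_eq_zero_iff c d).mp ((adj_iff C D).mp h).2) hσ
    have hge : 2 ≤ G.edist C D := by
      have h0 : G.edist C D ≠ 0 := fun h => hCD (SimpleGraph.edist_eq_zero_iff.mp h)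
      have h1 : G.edist C D ≠ 1 := fun h => hnadj (SimpleGraph.edist_eq_one_iff_adj.mp h)
      have hlt : 1 < G.edist C D :=
        lt_of_le_of_ne (Order.one_le_iff_pos.mpr (pos_iff_ne_zero.mpr h0)) (Ne.symm h1)
      have h2 := Order.add_one_le_of_lt hlt
      exact (show (2 : ℕ∞) = 1 + 1 by norm_num).trans_le h2
    have hed : G.edist C D = 2 := le_antisymm hle hge
    refine le_antisymm ?_ (hed ▸ G.edist_le_ediam)
    rw [SimpleGraph.ediam_le_iff]
    rintro ⟨u1, hu⟩ ⟨v1, hv⟩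
    obtain ⟨s, rfl⟩ := (WithZero.ne_zero_iff_exists).mp hu.1
    obtain ⟨t, rfl⟩ := (WithZero.ne_zero_iff_exists).mp hv.1
    by_cases hst : sigmaRel s t
    · obtain ⟨b1, hb0, hbomg⟩ := hu.2
      obtain ⟨t', rfl⟩ := (WithZero.ne_zero_iff_exists).mp hb0
      have h1 : ¬ sigmaRel s t' := (omg_eq_zero_iff s t').mp hbomg
      have h2 : ¬ sigmaRel t' t := fun h => h1 (sigma_trans hcomm hst (sigma_symm h))
      have hst' : s ≠ t' := fun h => h1 (by rw [← h]; exact sigma_refl hinv s)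
      have ht't : t' ≠ t := fun h => h2 (by rw [h]; exact sigma_refl hinv t)
      set W : Zx (0 : WithZero S) :=
        ⟨↑t', (mem_Zx_iff t').mpr ⟨s, fun h => h1 (sigma_symm h)⟩⟩ with hW
      have adj1 : G.Adj ⟨↑s, hu⟩ W := (adj_iff _ _).mpr
        ⟨fun h => hst' (WithZero.coe_inj.mp h), (omg_eq_zero_iff s t').mpr h1⟩
      have adj2 : G.Adj W ⟨↑t, hv⟩ := (adj_iff _ _).mpr
        ⟨fun h => ht't (WithZero.coe_inj.mp h), (omg_eq_zero_iff t' t).mpr h2⟩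
      calc G.edist ⟨↑s, hu⟩ ⟨↑t, hv⟩ ≤ G.edist ⟨↑s, hu⟩ W + G.edist W ⟨↑t, hv⟩ :=
            G.edist_triangle
        _ ≤ 2 := by
          rw [SimpleGraph.edist_eq_one_iff_adj.mpr adj1,
            SimpleGraph.edist_eq_one_iff_adj.mpr adj2]
          exact le_refl _
    · have hne : s ≠ t := fun h => hst (by rw [← h]; exact sigma_refl hinv s)
      have adj : G.Adj ⟨↑s, hu⟩ ⟨↑t, hv⟩ := (adj_iff _ _).mpr
        ⟨fun h => hne (WithZero.coe_inj.mp h), (omg_eq_zero_iff s t).mpr hst⟩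
      rw [SimpleGraph.edist_eq_one_iff_adj.mpr adj]
      norm_num
end
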